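/- Let S be a read-k, per-read-increasing, and k-regularly-interleaving sequence over X = {x_1, ..., x_n} (indexed so the first occurrences appear in order x_1, x_2, ..., x_n). If x_i appears in position ℓ of S and x_j with j > i appears in position ℓ+1, then j = i + 1. In other words, the sequence has no upward jumps of size greater than one. -/
import Mathlib


/-- Number of occurrences of the value `S ℓ` strictly before position `ℓ`
(so a first occurrence has `occIdx = 0`). -/
def occIdx {N n : ℕ} (S : Fin N → Fin n) (ℓ : Fin N) : ℕ :=
  (Finset.univ.filter fun p => p < ℓ ∧ S p = S ℓ).card

/-- `S` is a read-`k` sequence: every element appears exactly `k` times. -/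
def ReadK {N n : ℕ} (k : ℕ) (S : Fin N → Fin n) : Prop :=
  ∀ x : Fin n, (Finset.univ.filter fun ℓ => S ℓ = x).card = k

/-- `S` is per-read-increasing: within each read, elements occur in
increasing index order. -/
def PerReadIncr {N n : ℕ} (S : Fin N → Fin n) : Prop :=
  ∀ ℓ ℓ' : Fin N, occIdx S ℓ = occIdx S ℓ' → S ℓ < S ℓ' → ℓ < ℓ'

/-- The subsequence of `i`-th and `j`-th occurrences (`i < j`) is
2-regularly-interleaving: positions split into contiguous element-disjoint
blocks (given by a monotone block-labelling `B` constant on each element's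
relevant occurrences), and within a block all `i`-th occurrences precede
all `j`-th occurrences. -/
def RegIntPair {N n : ℕ} (S : Fin N → Fin n) (i j : ℕ) : Prop :=
  ∃ B : Fin N → ℕ, Monotone B ∧
    (∀ ℓ ℓ' : Fin N, (occIdx S ℓ = i ∨ occIdx S ℓ = j) →
      (occIdx S ℓ' = i ∨ occIdx S ℓ' = j) → S ℓ = S ℓ' → B ℓ = B ℓ') ∧
    (∀ ℓ ℓ' : Fin N, B ℓ = B ℓ' → occIdx S ℓ = j → occIdx S ℓ' = i → ℓ' < ℓ)

/-- `S` is `k`-regularly-interleaving. -/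
def RegIntK {N n : ℕ} (k : ℕ) (S : Fin N → Fin n) : Prop :=
  ∀ i j : ℕ, i < j → j < k → RegIntPair S i j

lemma occIdx_lt {N n k : ℕ} {S : Fin N → Fin n} (h1 : ReadK k S) (ℓ : Fin N) :
    occIdx S ℓ < k := by
  have h := h1 (S ℓ)
  rw [← h]
  apply Finset.card_lt_card
  constructor
  · intro p hp
    simp only [Finset.mem_filter, Finset.mem_univ, true_and] at hp ⊢
    exact hp.2
  · intro hsub
    have := hsub (by simp : ℓ ∈ Finset.univ.filter fun p => S p = S ℓ)
    simp at this

lemma exists_occ {N n k : ℕ} {S : Fin N → Fin n} (h1 : ReadK k S)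
    (x : Fin n) (m : ℕ) (hm : m < k) : ∃ p, S p = x ∧ occIdx S p = m := by
  classical
  set T := Finset.univ.filter (fun p => S p = x) with hT
  have hTcard : T.card = k := h1 x
  have hmono : ∀ p ∈ T, ∀ q ∈ T, p < q → occIdx S p < occIdx S q := by
    intro p hp q hq hpq
    simp only [hT, Finset.mem_filter, Finset.mem_univ, true_and] at hp hq
    apply Finset.card_lt_card
    constructor
    · intro r hr
      simp only [Finset.mem_filter, Finset.mem_univ, true_and] at hr ⊢
      exact ⟨lt_trans hr.1 hpq, by rw [hr.2, hp, hq]⟩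
    · intro hsub
      have := hsub (by simp [hpq, hp, hq] : p ∈ Finset.univ.filter fun r => r < q ∧ S r = S q)
      simp at this
  have hinj : Set.InjOn (occIdx S) T := by
    intro p hp q hq hpq
    rcases lt_trichotomy p q with h | h | h
    · exact absurd hpq (Nat.ne_of_lt (hmono p hp q hq h))
    · exact h
    · exact absurd hpq.symm (Nat.ne_of_lt (hmono q hq p hp h))
  have himg : T.image (occIdx S) ⊆ Finset.range k := by
    intro m hm
    simp only [Finset.mem_image] at hm
    obtain ⟨p, _, hp⟩ := hm
    rw [Finset.mem_range, ← hp]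
    exact occIdx_lt h1 p
  have hcard : (T.image (occIdx S)).card = k := by
    rw [Finset.card_image_of_injOn hinj, hTcard]
  have heq : T.image (occIdx S) = Finset.range k :=
    Finset.eq_of_subset_of_card_le himg (by rw [hcard, Finset.card_range])
  have : m ∈ T.image (occIdx S) := by rw [heq]; exact Finset.mem_range.mpr hm
  simp only [Finset.mem_image, hT, Finset.mem_filter, Finset.mem_univ, true_and] at this
  obtain ⟨p, hp1, hp2⟩ := this
  exact ⟨p, hp1, hp2⟩

/-- Lemma 3.1 -/
theorem stmt_5 {n k : ℕ} (S : Fin (k * n) → Fin n)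
    (h1 : ReadK k S) (h2 : PerReadIncr S) (h3 : RegIntK k S)
    (ℓ ℓ' : Fin (k * n)) (hsucc : (ℓ' : ℕ) = (ℓ : ℕ) + 1) (hlt : S ℓ < S ℓ') :
    ((S ℓ') : ℕ) = (S ℓ : ℕ) + 1 := by
  set a := S ℓ with ha
  set b := S ℓ' with hb
  have hab : (a : ℕ) < b := hlt
  set α := occIdx S ℓ with hα
  set β := occIdx S ℓ' with hβ
  have hαk : α < k := occIdx_lt h1 ℓ
  have hβk : β < k := occIdx_lt h1 ℓ'
  by_contra hgoal
  have hb2 : (a : ℕ) + 1 < b := by omega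
  set c : Fin n := ⟨(a : ℕ) + 1, lt_trans hb2 b.isLt⟩ with hc
  have hac : a < c := by simp [Fin.lt_def, hc]
  have hcb : c < b := by simpa [Fin.lt_def, hc] using hb2
  rcases lt_trichotomy α β with h | h | h
  · -- α < β : direct contradiction, no c needed
    obtain ⟨B, hmono, hconst, hsep⟩ := h3 α β h hβk
    obtain ⟨p, hp1, hp2⟩ := exists_occ h1 b α hαk
    have hBp : B ℓ' = B p :=
      hconst ℓ' p (Or.inr hβ.symm) (Or.inl hp2) (by rw [hp1, hb])
    have hpℓ' : p < ℓ' := hsep ℓ' p hBp hβ.symm hp2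
    have hℓp : ℓ < p := h2 ℓ p (hα.symm.trans hp2.symm) (by rw [← ha, hp1]; exact hlt)
    have e1 : (ℓ : ℕ) < p := hℓp
    have e2 : (p : ℕ) < ℓ' := hpℓ'
    omega
  · -- α = β : use c in the same read
    obtain ⟨r, hr1, hr2⟩ := exists_occ h1 c α hαk
    have hℓr : ℓ < r := h2 ℓ r (hα.symm.trans hr2.symm) (by rw [← ha, hr1]; exact hac)
    have hrℓ' : r < ℓ' := h2 r ℓ' (hr2.trans (h.trans hβ)) (by rw [hr1, ← hb]; exact hcb)
    have e1 : (ℓ : ℕ) < r := hℓr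
    have e2 : (r : ℕ) < ℓ' := hrℓ'
    omega
  · -- β < α
    obtain ⟨B, hmono, hconst, hsep⟩ := h3 β α h hαk
    have hℓℓ' : ℓ < ℓ' := by rw [Fin.lt_def]; omega
    have hBle : B ℓ ≤ B ℓ' := hmono (le_of_lt hℓℓ')
    have hBne : B ℓ ≠ B ℓ' := by
      intro he
      have := hsep ℓ ℓ' he hα.symm hβ.symm
      have : (ℓ' : ℕ) < ℓ := this
      omega
    obtain ⟨r, hr1, hr2⟩ := exists_occ h1 c β hβk
    obtain ⟨s, hs1, hs2⟩ := exists_occ h1 c α hαk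
    have hBrs : B r = B s := hconst r s (Or.inl hr2) (Or.inr hs2) (hr1.trans hs1.symm)
    have hrℓ' : r < ℓ' := h2 r ℓ' (hr2.trans hβ) (by rw [hr1, ← hb]; exact hcb)
    have hrne : (r : ℕ) ≠ ℓ := by
      intro he
      have : S r = S ℓ := by rw [Fin.ext he]
      rw [hr1, ← ha] at this
      have := congrArg Fin.val this
      simp [hc] at this
    have hrℓ : r < ℓ := by
      have : (r : ℕ) < ℓ' := hrℓ'
      rw [Fin.lt_def]; omega
    have hBrℓ : B r ≤ B ℓ := hmono (le_of_lt hrℓ)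
    have hℓs : ℓ < s := h2 ℓ s (hα.symm.trans hs2.symm) (by rw [← ha, hs1]; exact hac)
    have hsne : (s : ℕ) ≠ ℓ' := by
      intro he
      have : S s = S ℓ' := by rw [Fin.ext he]
      rw [hs1, ← hb] at this
      have := congrArg Fin.val this
      simp [hc] at this
      omega
    have hℓ's : ℓ' < s := by
      have : (ℓ : ℕ) < s := hℓs
      rw [Fin.lt_def]; omega
    have hBℓ's : B ℓ' ≤ B s := hmono (le_of_lt hℓ's)
    omega
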